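/- (Proposition 1) In the latent class model with covariates, one full iteration of the nested EM algorithm does not decrease the observed-data log-likelihood: starting from (β⁽ᵗ⁾, π⁽ᵗ⁾) with all entries of π⁽ᵗ⁾ strictly positive, (i) compute responsibilities s̄ᵢᵣ at (β⁽ᵗ⁾, π⁽ᵗ⁾) and set π⁽ᵗ⁺¹⁾_{jr}(y) = Σᵢ s̄ᵢᵣ·1(y_{ij}=y)/Σᵢ s̄ᵢᵣ; (ii) for r = 1,…,R−1 in turn, recompute the responsibilities s̄ᵢᵣ using π⁽ᵗ⁺¹⁾ and the most recent coefficients (β_1⁽ᵗ⁺¹⁾,…,β_{r−1}⁽ᵗ⁺¹⁾, β_r⁽ᵗ⁾,…,β_{R−1}⁽ᵗ⁾), set offsets aᵢ = log(Σ_{l≠r} exp(x_iᵀβ_l)) from these most recent coefficients, ψᵢ = x_iᵀβ_r⁽ᵗ⁾ − aᵢ, weights ωᵢ = tanh(ψᵢ/2)/(2ψᵢ) (with ωᵢ = 1/4 if ψᵢ = 0), ηᵢ = (s̄ᵢᵣ − 1/2 + ωᵢ·aᵢ)/ωᵢ, and, assuming XᵀΩX is invertible at each cycle (Ω = diag(ω)),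 update β_r⁽ᵗ⁺¹⁾ = (XᵀΩX)⁻¹XᵀΩη. Then ℓ(β⁽ᵗ⁺¹⁾, π⁽ᵗ⁺¹⁾) ≥ ℓ(β⁽ᵗ⁾, π⁽ᵗ⁾). -/

import Mathlib

/-!
Every update in the iteration is a minorise–maximise step for `ℓ`. By Jensen's inequality,
`ℓ(β', π') - ℓ(β, π)` is at least the gain in the expected complete-data log-likelihood
`Σᵢ Σᵣ s̄ᵢᵣ log (νᵣ(xᵢ) Πⱼ πⱼᵣ(yᵢⱼ))`, with the responsibilities `s̄` frozen at `(β, π)`.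
For the item probabilities this gain is nonnegative by Gibbs' inequality, because the update
is the `s̄`-weighted empirical distribution of the responses. In the cycle for `β_r` the
log-normaliser depends on `xᵢᵀβ_r` only through `log (1 + exp ψᵢ)`, `ψᵢ = xᵢᵀβ_r - aᵢ`, and the
Jaakkola–Jordan bound majorises this by a quadratic with curvature `ωᵢ`. The gain is then at
least half the decrease of `Σᵢ ωᵢ (xᵢᵀb - ηᵢ)²` from `b = β_r` to the new coefficient, which is
nonnegative because weighted least squares minimises that sum.
-/

namespace LCR15

open Matrix

/-- Class probabilities `ν_r(x) = exp(xᵀβ_r)/Σ_l exp(xᵀβ_l)`. -/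
noncomputable def nu {P R : ℕ} (xi : Fin P → ℝ) (β : Fin R → Fin P → ℝ) (r : Fin R) : ℝ :=
  Real.exp (∑ p, xi p * β r p) / (∑ l, Real.exp (∑ p, xi p * β l p))

/-- Observed-data log-likelihood
`ℓ(β, π) = Σᵢ log[Σᵣ ν_r(xᵢ)·Πⱼ π_{jr}(y_{ij})]`. -/
noncomputable def loglik {n P R J : ℕ} {K : Fin J → ℕ}
    (x : Fin n → Fin P → ℝ) (y : ∀ _ : Fin n, ∀ j : Fin J, Fin (K j))
    (β : Fin R → Fin P → ℝ) (π : ∀ j : Fin J, Fin R → Fin (K j) → ℝ) : ℝ :=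
  ∑ i, Real.log (∑ r, nu (x i) β r * ∏ j, π j r (y i j))

/-- Responsibilities
`s̄ᵢᵣ = ν_r(xᵢ)·Πⱼ π_{jr}(y_{ij}) / Σ_l ν_l(xᵢ)·Πⱼ π_{jl}(y_{ij})`. -/
noncomputable def sbar {n P R J : ℕ} {K : Fin J → ℕ}
    (x : Fin n → Fin P → ℝ) (y : ∀ _ : Fin n, ∀ j : Fin J, Fin (K j))
    (β : Fin R → Fin P → ℝ) (π : ∀ j : Fin J, Fin R → Fin (K j) → ℝ)
    (i : Fin n) (r : Fin R) : ℝ :=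
  (nu (x i) β r * ∏ j, π j r (y i j)) / (∑ l, nu (x i) β l * ∏ j, π j l (y i j))

/-- Pólya-gamma weight `ω(ψ) = tanh(ψ/2)/(2ψ)`, extended by `1/4` at `ψ = 0`. -/
noncomputable def pgOmega (ψ : ℝ) : ℝ :=
  if ψ = 0 then 1 / 4 else Real.tanh (ψ / 2) / (2 * ψ)

/-- Offsets `aᵢ = log(Σ_{l≠r} exp(xᵢᵀβ_l))` for the cycle updating `β_r`. -/
noncomputable def cycleA {n P R : ℕ} (x : Fin n → Fin P → ℝ)
    (β : Fin R → Fin P → ℝ) (r : Fin R) (i : Fin n) : ℝ :=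
  Real.log (∑ l ∈ Finset.univ.erase r, Real.exp (∑ p, x i p * β l p))

/-- Pólya-gamma weights `ωᵢ = pgOmega(xᵢᵀβ_r − aᵢ)` for the cycle updating `β_r`. -/
noncomputable def cycleOmega {n P R : ℕ} (x : Fin n → Fin P → ℝ)
    (β : Fin R → Fin P → ℝ) (r : Fin R) (i : Fin n) : ℝ :=
  pgOmega ((∑ p, x i p * β r p) - cycleA x β r i)

/-- The matrix `XᵀΩX` (with `Ω = diag(ω)`) for the cycle updating `β_r`. -/
noncomputable def cycleMat {n P R : ℕ} (x : Fin n → Fin P → ℝ)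
    (β : Fin R → Fin P → ℝ) (r : Fin R) : Matrix (Fin P) (Fin P) ℝ :=
  (Matrix.of x)ᵀ * Matrix.diagonal (cycleOmega x β r) * Matrix.of x

/-- Working responses `ηᵢ = (s̄ᵢᵣ − 1/2 + ωᵢaᵢ)/ωᵢ` for the cycle updating `β_r`. -/
noncomputable def cycleEta {n P R J : ℕ} {K : Fin J → ℕ}
    (x : Fin n → Fin P → ℝ) (y : ∀ _ : Fin n, ∀ j : Fin J, Fin (K j))
    (π : ∀ j : Fin J, Fin R → Fin (K j) → ℝ)
    (β : Fin R → Fin P → ℝ) (r : Fin R) (i : Fin n) : ℝ :=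
  (sbar x y β π i r - 1 / 2 + cycleOmega x β r i * cycleA x β r i) / cycleOmega x β r i

/-- One Pólya-gamma conditional expectation–maximization cycle: replace `β_r` by
the weighted least squares solution `(XᵀΩX)⁻¹XᵀΩη`, keeping all other
coefficient vectors fixed. -/
noncomputable def betaCycle {n P R J : ℕ} {K : Fin J → ℕ}
    (x : Fin n → Fin P → ℝ) (y : ∀ _ : Fin n, ∀ j : Fin J, Fin (K j))
    (π : ∀ j : Fin J, Fin R → Fin (K j) → ℝ)
    (r : Fin R) (β : Fin R → Fin P → ℝ) : Fin R → Fin P → ℝ :=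
  Function.update β r
    ((cycleMat x β r)⁻¹ *ᵥ
      (((Matrix.of x)ᵀ * Matrix.diagonal (cycleOmega x β r)) *ᵥ cycleEta x y π β r))

/-- The coefficients after the first `k` nested cycles (cycles `r = 1, …, k`,
each using the most recent coefficients). -/
noncomputable def betaAfter {n P R J : ℕ} {K : Fin J → ℕ}
    (x : Fin n → Fin P → ℝ) (y : ∀ _ : Fin n, ∀ j : Fin J, Fin (K j))
    (π : ∀ j : Fin J, Fin R → Fin (K j) → ℝ)
    (β0 : Fin R → Fin P → ℝ) : ℕ → Fin R → Fin P → ℝ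
  | 0 => β0
  | k + 1 =>
      if h : k < R then betaCycle x y π ⟨k, h⟩ (betaAfter x y π β0 k)
      else betaAfter x y π β0 k

section PolyaGamma

open Real Set

lemma hasDerivAt_tanh (x : ℝ) : HasDerivAt tanh (1 / cosh x ^ 2) x := by
  have h := (hasDerivAt_sinh x).div (hasDerivAt_cosh x) (cosh_pos x).ne'
  rw [show sinh / cosh = tanh from funext fun y => (tanh_eq_sinh_div_cosh y).symm] at h
  exact h.congr_deriv (by rw [← cosh_sq_sub_sinh_sq x]; ring)

lemma tanh_le_self {x : ℝ} (hx : 0 ≤ x) : tanh x ≤ x := by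
  have hmono : Monotone fun t => t - tanh t :=
    monotone_of_hasDerivAt_nonneg (fun t => (hasDerivAt_id' t).sub (hasDerivAt_tanh t))
      fun t => sub_nonneg.2 (div_le_one_of_le₀ (one_le_pow₀ (one_le_cosh t)) (by positivity))
  simpa using hmono hx

lemma antitoneOn_tanh_div_self : AntitoneOn (fun x => tanh x / x) (Ioi 0) := by
  have hderiv : ∀ x ∈ Ioi (0 : ℝ),
      HasDerivAt (fun x => tanh x / x) ((1 / cosh x ^ 2 * x - tanh x * 1) / x ^ 2) x :=
    fun x hx => (hasDerivAt_tanh x).div (hasDerivAt_id x) (ne_of_gt hx)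
  refine antitoneOn_of_hasDerivWithinAt_nonpos (convex_Ioi 0)
    (fun x hx => (hderiv x hx).continuousAt.continuousWithinAt)
    (fun x hx => by rw [interior_Ioi] at hx; exact (hderiv x hx).hasDerivWithinAt) ?_
  intro x hx
  rw [interior_Ioi] at hx
  have hx : 0 < x := hx
  have hsinh : x ≤ sinh x * cosh x := by
    have := self_le_sinh_iff.2 (by positivity : 0 ≤ 2 * x)
    rw [sinh_two_mul] at this
    linarith
  have hc := cosh_pos x
  apply div_nonpos_of_nonpos_of_nonneg _ (by positivity)
  rw [tanh_eq_sinh_div_cosh, sub_nonpos, mul_one, div_mul_eq_mul_div, one_mul,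
    div_le_div_iff₀ (by positivity) hc]
  nlinarith

lemma pgOmega_of_ne_zero {ψ : ℝ} (hψ : ψ ≠ 0) : pgOmega ψ = tanh (ψ / 2) / (ψ / 2) / 4 := by
  rw [pgOmega, if_neg hψ]
  field_simp
  ring

lemma mul_pgOmega (ψ : ℝ) : ψ * pgOmega ψ = tanh (ψ / 2) / 2 := by
  rcases eq_or_ne ψ 0 with rfl | hψ
  · simp
  · rw [pgOmega_of_ne_zero hψ]
    field_simp
    ring

lemma pgOmega_neg (ψ : ℝ) : pgOmega (-ψ) = pgOmega ψ := by
  rcases eq_or_ne ψ 0 with rfl | hψ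
  · simp
  · rw [pgOmega_of_ne_zero hψ, pgOmega_of_ne_zero (neg_ne_zero.2 hψ), neg_div, tanh_neg,
      neg_div_neg_eq]

lemma pgOmega_abs (ψ : ℝ) : pgOmega |ψ| = pgOmega ψ := by
  rcases abs_choice ψ with h | h <;> rw [h]
  exact pgOmega_neg ψ

lemma pgOmega_antitoneOn : AntitoneOn pgOmega (Ici 0) := by
  intro s hs t ht hst
  rcases eq_or_ne t 0 with rfl | ht0
  · rw [le_antisymm hst hs]
  have ht : 0 < t := lt_of_le_of_ne ht (Ne.symm ht0)
  rw [pgOmega_of_ne_zero ht0]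
  rcases eq_or_ne s 0 with rfl | hs0
  · rw [pgOmega, if_pos rfl]
    have := tanh_le_self (by positivity : 0 ≤ t / 2)
    rw [div_div, div_le_div_iff₀ (by positivity) (by norm_num)]
    nlinarith
  · have hs : 0 < s := lt_of_le_of_ne hs (Ne.symm hs0)
    rw [pgOmega_of_ne_zero hs0]
    have := antitoneOn_tanh_div_self (half_pos hs) (half_pos ht) (by linarith)
    exact div_le_div_of_nonneg_right this (by norm_num)

lemma pgOmega_pos (ψ : ℝ) : 0 < pgOmega ψ := by
  rw [← pgOmega_abs]
  rcases (abs_nonneg ψ).eq_or_lt with h | h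
  · rw [← h, pgOmega, if_pos rfl]; norm_num
  · rw [pgOmega_of_ne_zero h.ne', tanh_eq_sinh_div_cosh]
    have := sinh_pos_iff.2 (half_pos h)
    have := cosh_pos (|ψ| / 2)
    positivity

lemma tanh_half (t : ℝ) : tanh (t / 2) = (exp t - 1) / (exp t + 1) := by
  have h : exp t = exp (t / 2) * exp (t / 2) := by rw [← exp_add]; ring_nf
  rw [tanh_eq, exp_neg, h]
  have := exp_pos (t / 2)
  field_simp

lemma hasDerivAt_log_one_add_exp_sub_half (t : ℝ) :
    HasDerivAt (fun t => log (1 + exp t) - t / 2) (t * pgOmega t) t := by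
  have h := (((hasDerivAt_exp t).const_add 1).log (by positivity)).sub
    ((hasDerivAt_id t).div_const 2)
  refine h.congr_deriv ?_
  rw [mul_pgOmega, tanh_half]
  have := exp_pos t
  field_simp
  ring

lemma log_one_add_exp_neg_add_half (t : ℝ) :
    log (1 + exp (-t)) - -t / 2 = log (1 + exp t) - t / 2 := by
  have h : 1 + exp (-t) = exp (-t) * (1 + exp t) := by rw [mul_add, ← exp_add]; simp; ring
  rw [h, log_mul (exp_pos _).ne' (by positivity), log_exp]
  ring

lemma isMinOn_of_hasDerivAt_sign {f f' : ℝ → ℝ} {a c : ℝ} (hf : ∀ t, HasDerivAt f (f' t) t)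
    (hdec : ∀ t ∈ Ioo a c, f' t ≤ 0) (hinc : ∀ t ∈ Ioi c, 0 ≤ f' t) :
    IsMinOn f (Ici a) c := by
  have hcont : ContinuousOn f univ := fun t _ => (hf t).continuousAt.continuousWithinAt
  intro t ht
  rcases le_total c t with hct | htc
  · refine monotoneOn_of_hasDerivWithinAt_nonneg (convex_Ici c) (hcont.mono (subset_univ _))
      (fun s _ => (hf s).hasDerivWithinAt) (fun s hs => hinc s ?_) self_mem_Ici hct hct
    rwa [interior_Ici] at hs
  · refine antitoneOn_of_hasDerivWithinAt_nonpos (convex_Icc a c) (hcont.mono (subset_univ _))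
      (fun s _ => (hf s).hasDerivWithinAt) (fun s hs => hdec s ?_) ⟨ht, htc⟩
      ⟨(mem_Ici.1 ht).trans htc, le_rfl⟩ htc
    rwa [interior_Icc] at hs

/-- The Jaakkola–Jordan bound. `t ↦ log (1 + exp t) - t / 2` is even with derivative
`t * pgOmega t`, and `pgOmega` decreases in `|t|`, so the gap between the two sides is
smallest at `t = ±ψ`, where it vanishes. -/
lemma log_one_add_exp_le (ψ t : ℝ) :
    log (1 + exp t) ≤ log (1 + exp ψ) + (t - ψ) / 2 + pgOmega ψ / 2 * (t ^ 2 - ψ ^ 2) := by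
  set G := fun t => pgOmega ψ / 2 * t ^ 2 - (log (1 + exp t) - t / 2)
  have hG : ∀ t, HasDerivAt G (t * (pgOmega |ψ| - pgOmega t)) t := fun t => by
    refine (((hasDerivAt_pow 2 t).const_mul (pgOmega ψ / 2)).sub
      (hasDerivAt_log_one_add_exp_sub_half t)).congr_deriv ?_
    rw [pgOmega_abs]; ring
  have hG_abs : ∀ t, G |t| = G t := fun t => by
    rcases abs_choice t with h | h <;> simp only [G, h, neg_sq, log_one_add_exp_neg_add_half]
  have hmin : IsMinOn G (Ici 0) |ψ| := isMinOn_of_hasDerivAt_sign hG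
    (fun s hs => mul_nonpos_of_nonneg_of_nonpos hs.1.le
      (sub_nonpos.2 (pgOmega_antitoneOn hs.1.le (abs_nonneg ψ) hs.2.le)))
    (fun s hs => mul_nonneg ((abs_nonneg ψ).trans hs.le)
      (sub_nonneg.2 (pgOmega_antitoneOn (abs_nonneg ψ) ((abs_nonneg ψ).trans hs.le) hs.le)))
  have : G |ψ| ≤ G |t| := hmin (abs_nonneg t)
  rw [hG_abs, hG_abs] at this
  simp only [G] at this
  linarith

/-- With the working response `η`, the Jaakkola–Jordan minorant of the gain of one unit in the
cycle for `β_r` becomes a difference of weighted squared residuals. -/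
lemma pgOmega_mul_sq_sub_le {s a u v η : ℝ}
    (hη : pgOmega (u - a) * η = s - 1 / 2 + pgOmega (u - a) * a) :
    pgOmega (u - a) / 2 * ((u - η) ^ 2 - (v - η) ^ 2) ≤
      s * (v - u) - (log (1 + exp (v - a)) - log (1 + exp (u - a))) := by
  have hquad : pgOmega (u - a) / 2 * ((u - η) ^ 2 - (v - η) ^ 2) =
      (s - 1 / 2) * (v - u) - pgOmega (u - a) / 2 * ((v - a) ^ 2 - (u - a) ^ 2) := by
    linear_combination (v - u) * hη
  have := log_one_add_exp_le (u - a) (v - a)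
  rw [hquad]
  linarith

end PolyaGamma

section Inequalities

open Real Finset

lemma sum_div_mul_log_sub_le {ι : Type*} [Fintype ι] [Nonempty ι] {a b : ι → ℝ}
    (ha : ∀ r, 0 < a r) (hb : ∀ r, 0 < b r) :
    ∑ r, (a r / ∑ l, a l) * (log (b r) - log (a r)) ≤ log (∑ r, b r) - log (∑ r, a r) := by
  have hA : 0 < ∑ l, a l := sum_pos (fun r _ => ha r) univ_nonempty
  have hjensen := strictConcaveOn_log_Ioi.concaveOn.le_map_sum (t := univ)
    (w := fun r => a r / ∑ l, a l) (p := fun r => b r / a r)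
    (fun r _ => (div_pos (ha r) hA).le) (by rw [← sum_div, div_self hA.ne'])
    (fun r _ => div_pos (hb r) (ha r))
  have hmean : ∑ r, (a r / ∑ l, a l) * (b r / a r) = (∑ r, b r) / ∑ r, a r := by
    rw [sum_div]
    exact sum_congr rfl fun r _ => by field_simp [(ha r).ne']
  have hlog : ∀ r, log (b r / a r) = log (b r) - log (a r) := fun r =>
    log_div (hb r).ne' (ha r).ne'
  simp only [smul_eq_mul, hmean, hlog] at hjensen
  rwa [log_div (sum_pos (fun r _ => hb r) univ_nonempty).ne' hA.ne'] at hjensen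

lemma sum_mul_log_le_sum_mul_log {κ : Type*} [Fintype κ] {p q : κ → ℝ} (hp : ∀ k, 0 ≤ p k)
    (hq : ∀ k, 0 < q k) (hp1 : ∑ k, p k = 1) (hq1 : ∑ k, q k = 1) :
    ∑ k, p k * log (q k) ≤ ∑ k, p k * log (p k) := by
  have hterm : ∀ k, p k * log (q k) - p k * log (p k) ≤ q k - p k := fun k => by
    rcases (hp k).eq_or_lt with h | h
    · simp [← h, (hq k).le]
    · have := mul_le_mul_of_nonneg_left (log_le_sub_one_of_pos (div_pos (hq k) h)) h.le
      rw [log_div (hq k).ne' h.ne', show p k * (q k / p k - 1) = q k - p k by field_simp] at this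
      linarith
  have := sum_le_sum fun k (_ : k ∈ univ) => hterm k
  rw [sum_sub_distrib, sum_sub_distrib, hp1, hq1, sub_self, sub_nonpos] at this
  exact this

lemma sum_mul_comp_eq_sum_fiber_mul {ι κ : Type*} [Fintype ι] [Fintype κ] [DecidableEq κ]
    (s : ι → ℝ) (z : ι → κ) (g : κ → ℝ) :
    ∑ i, s i * g (z i) = ∑ k, (∑ i, s i * if z i = k then 1 else 0) * g k := by
  simp only [mul_ite, mul_one, mul_zero, sum_mul, ite_mul, zero_mul]
  rw [sum_comm]
  simp

lemma sum_mul_log_le_sum_mul_log_weightedFreq {ι κ : Type*} [Fintype ι] [Fintype κ]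
    [DecidableEq κ] {s : ι → ℝ} (hs : ∀ i, 0 ≤ s i) (z : ι → κ) {q : κ → ℝ}
    (hq : ∀ k, 0 < q k) (hq1 : ∑ k, q k = 1) :
    ∑ i, s i * log (q (z i)) ≤
      ∑ i, s i * log ((∑ l, s l * if z l = z i then 1 else 0) / ∑ l, s l) := by
  rcases (sum_nonneg fun i (_ : i ∈ univ) => hs i).eq_or_lt with hS | hS
  · have hs0 := (sum_eq_zero_iff_of_nonneg fun i (_ : i ∈ univ) => hs i).1 hS.symm
    simp [hs0]
  set S := ∑ l, s l
  set c : κ → ℝ := fun k => ∑ l, s l * if z l = k then 1 else 0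
  have hc : ∀ k, 0 ≤ c k := fun k => sum_nonneg fun i _ => mul_nonneg (hs i) (by positivity)
  have hc1 : ∑ k, c k / S = 1 := by
    have := sum_mul_comp_eq_sum_fiber_mul s z fun _ => 1
    simp only [mul_one] at this
    rw [← sum_div, div_eq_one_iff_eq hS.ne', ← this]
  have hgibbs := sum_mul_log_le_sum_mul_log (fun k => div_nonneg (hc k) hS.le) hq hc1 hq1
  have hscale : ∀ f : κ → ℝ, ∑ k, c k * f k = S * ∑ k, c k / S * f k := fun f => by
    rw [mul_sum]; exact sum_congr rfl fun k _ => by field_simp [hS.ne']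
  rw [sum_mul_comp_eq_sum_fiber_mul s z (fun k => log (q k)),
    sum_mul_comp_eq_sum_fiber_mul s z (fun k => log (c k / S)), hscale, hscale]
  exact mul_le_mul_of_nonneg_left hgibbs hS.le

lemma sum_mul_sq_sub_le_of_normal_eq {m k : Type*} [Fintype m] [Fintype k] [DecidableEq m]
    (X : Matrix m k ℝ) {ω : m → ℝ} (hω : ∀ i, 0 ≤ ω i) {η : m → ℝ} {b₀ : k → ℝ}
    (hnormal : (Xᵀ * diagonal ω * X) *ᵥ b₀ = (Xᵀ * diagonal ω) *ᵥ η) (b : k → ℝ) :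
    ∑ i, ω i * ((X *ᵥ b₀) i - η i) ^ 2 ≤ ∑ i, ω i * ((X *ᵥ b) i - η i) ^ 2 := by
  set e := X *ᵥ b₀ - η
  set d := X *ᵥ (b - b₀)
  have horth : ∑ i, ω i * e i * d i = 0 := by
    have h0 : Xᵀ *ᵥ (diagonal ω *ᵥ e) = 0 := by
      rw [mulVec_sub, mulVec_sub, mulVec_mulVec, mulVec_mulVec, mulVec_mulVec, ← hnormal,
        Matrix.mul_assoc, sub_self]
    calc ∑ i, ω i * e i * d i = (diagonal ω *ᵥ e) ⬝ᵥ (X *ᵥ (b - b₀)) := by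
          simp [dotProduct, mulVec_diagonal, d]
      _ = 0 := by rw [dotProduct_mulVec, ← mulVec_transpose, h0, zero_dotProduct]
  have hsplit : ∀ i, (X *ᵥ b) i - η i = e i + d i := fun i => by
    simp only [e, d, mulVec_sub, Pi.sub_apply]; ring
  calc ∑ i, ω i * e i ^ 2
      ≤ ∑ i, ω i * e i ^ 2 + 2 * ∑ i, ω i * e i * d i + ∑ i, ω i * d i ^ 2 := by
        rw [horth]
        linarith [sum_nonneg fun i (_ : i ∈ univ) => mul_nonneg (hω i) (sq_nonneg (d i))]
    _ = ∑ i, ω i * ((X *ᵥ b) i - η i) ^ 2 := by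
        simp only [hsplit, mul_sum, ← sum_add_distrib]
        exact sum_congr rfl fun i _ => by ring

lemma log_sum_exp_eq_add_log_one_add_exp {ι : Type*} [Fintype ι] [DecidableEq ι]
    (f : ι → ℝ) {r : ι} (hr : (univ.erase r).Nonempty) :
    log (∑ l, exp (f l)) = log (∑ l ∈ univ.erase r, exp (f l))
      + log (1 + exp (f r - log (∑ l ∈ univ.erase r, exp (f l)))) := by
  have hpos : 0 < ∑ l ∈ univ.erase r, exp (f l) := sum_pos (fun l _ => exp_pos _) hr
  rw [← log_mul hpos.ne' (by positivity), exp_sub, exp_log hpos, mul_add, mul_one,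
    mul_div_cancel₀ _ hpos.ne', ← add_sum_erase _ _ (mem_univ r), add_comm]

end Inequalities

section Model

open Finset

variable {n P R J : ℕ} {K : Fin J → ℕ} (x : Fin n → Fin P → ℝ)
  (y : ∀ _ : Fin n, ∀ j : Fin J, Fin (K j))

noncomputable def joint (β : Fin R → Fin P → ℝ) (π : ∀ j : Fin J, Fin R → Fin (K j) → ℝ)
    (i : Fin n) (r : Fin R) : ℝ :=
  nu (x i) β r * ∏ j, π j r (y i j)

noncomputable def piUpdate (β : Fin R → Fin P → ℝ) (π : ∀ j : Fin J, Fin R → Fin (K j) → ℝ) :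
    ∀ j : Fin J, Fin R → Fin (K j) → ℝ :=
  fun j r yv => (∑ i, sbar x y β π i r * (if y i j = yv then (1 : ℝ) else 0)) /
    (∑ i, sbar x y β π i r)

lemma nu_pos (xi : Fin P → ℝ) (β : Fin R → Fin P → ℝ) (r : Fin R) : 0 < nu xi β r :=
  div_pos (Real.exp_pos _) (sum_pos (fun _ _ => Real.exp_pos _) ⟨r, mem_univ r⟩)

lemma log_nu (xi : Fin P → ℝ) (β : Fin R → Fin P → ℝ) (r : Fin R) :
    Real.log (nu xi β r) = ∑ p, xi p * β r p - Real.log (∑ l, Real.exp (∑ p, xi p * β l p)) := by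
  rw [nu, Real.log_div (Real.exp_pos _).ne'
    (sum_pos (fun _ _ => Real.exp_pos _) ⟨r, mem_univ r⟩).ne', Real.log_exp]

lemma loglik_eq_sum_log_sum_joint (β : Fin R → Fin P → ℝ)
    (π : ∀ j : Fin J, Fin R → Fin (K j) → ℝ) :
    loglik x y β π = ∑ i, Real.log (∑ r, joint x y β π i r) := rfl

lemma sbar_eq_joint_div (β : Fin R → Fin P → ℝ) (π : ∀ j : Fin J, Fin R → Fin (K j) → ℝ)
    (i : Fin n) (r : Fin R) : sbar x y β π i r = joint x y β π i r / ∑ l, joint x y β π i l :=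
  rfl

variable {x y}

lemma joint_pos {β : Fin R → Fin P → ℝ} {π : ∀ j : Fin J, Fin R → Fin (K j) → ℝ}
    (hπ : ∀ i j r, 0 < π j r (y i j)) (i : Fin n) (r : Fin R) : 0 < joint x y β π i r :=
  mul_pos (nu_pos _ _ _) (prod_pos fun j _ => hπ i j r)

lemma log_joint {β : Fin R → Fin P → ℝ} {π : ∀ j : Fin J, Fin R → Fin (K j) → ℝ}
    (hπ : ∀ i j r, 0 < π j r (y i j)) (i : Fin n) (r : Fin R) :
    Real.log (joint x y β π i r) = Real.log (nu (x i) β r) + ∑ j, Real.log (π j r (y i j)) := by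
  rw [joint, Real.log_mul (nu_pos _ _ _).ne' (prod_pos fun j _ => hπ i j r).ne',
    Real.log_prod fun j _ => (hπ i j r).ne']

lemma sbar_pos {β : Fin R → Fin P → ℝ} {π : ∀ j : Fin J, Fin R → Fin (K j) → ℝ}
    (hπ : ∀ i j r, 0 < π j r (y i j)) (i : Fin n) (r : Fin R) : 0 < sbar x y β π i r :=
  div_pos (joint_pos hπ i r) (sum_pos (fun l _ => joint_pos hπ i l) ⟨r, mem_univ r⟩)

lemma sum_sbar [NeZero R] {β : Fin R → Fin P → ℝ} {π : ∀ j : Fin J, Fin R → Fin (K j) → ℝ}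
    (hπ : ∀ i j r, 0 < π j r (y i j)) (i : Fin n) : ∑ r, sbar x y β π i r = 1 := by
  simp only [sbar_eq_joint_div]
  rw [← sum_div, div_self (sum_pos (fun l _ => joint_pos hπ i l) univ_nonempty).ne']

lemma loglik_le_of_expected_log_joint_le [NeZero R]
    {β β' : Fin R → Fin P → ℝ} {π π' : ∀ j : Fin J, Fin R → Fin (K j) → ℝ}
    (hπ : ∀ i j r, 0 < π j r (y i j)) (hπ' : ∀ i j r, 0 < π' j r (y i j))
    (h : ∑ i, ∑ r, sbar x y β π i r * Real.log (joint x y β π i r) ≤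
      ∑ i, ∑ r, sbar x y β π i r * Real.log (joint x y β' π' i r)) :
    loglik x y β π ≤ loglik x y β' π' := by
  have hjensen : ∀ i, ∑ r, sbar x y β π i r *
      (Real.log (joint x y β' π' i r) - Real.log (joint x y β π i r)) ≤
      Real.log (∑ r, joint x y β' π' i r) - Real.log (∑ r, joint x y β π i r) :=
    fun i => sum_div_mul_log_sub_le (joint_pos hπ i) (joint_pos hπ' i)
  have := sum_le_sum fun i (_ : i ∈ univ) => hjensen i
  simp only [mul_sub, sum_sub_distrib] at this
  rw [loglik_eq_sum_log_sum_joint, loglik_eq_sum_log_sum_joint]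
  linarith

lemma piUpdate_pos {β : Fin R → Fin P → ℝ} {π : ∀ j : Fin J, Fin R → Fin (K j) → ℝ}
    (hπ : ∀ i j r, 0 < π j r (y i j)) (i : Fin n) (j : Fin J) (r : Fin R) :
    0 < piUpdate x y β π j r (y i j) := by
  refine div_pos (sum_pos' (fun i' _ => mul_nonneg (sbar_pos hπ i' r).le (by positivity))
    ⟨i, mem_univ i, ?_⟩) (sum_pos (fun i' _ => sbar_pos hπ i' r) ⟨i, mem_univ i⟩)
  simpa using sbar_pos (x := x) (β := β) hπ i r

lemma loglik_le_loglik_piUpdate [NeZero R] {β : Fin R → Fin P → ℝ}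
    {π : ∀ j : Fin J, Fin R → Fin (K j) → ℝ} (hπ_pos : ∀ j r yv, 0 < π j r yv)
    (hπ_sum : ∀ j r, ∑ yv, π j r yv = 1) :
    loglik x y β π ≤ loglik x y β (piUpdate x y β π) := by
  have hπ : ∀ i j r, 0 < π j r (y i j) := fun i j r => hπ_pos j r _
  have hπ' := piUpdate_pos (x := x) (β := β) hπ
  refine loglik_le_of_expected_log_joint_le hπ hπ' ?_
  have hfreq : ∀ r j, ∑ i, sbar x y β π i r * Real.log (π j r (y i j)) ≤
      ∑ i, sbar x y β π i r * Real.log (piUpdate x y β π j r (y i j)) := fun r j =>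
    sum_mul_log_le_sum_mul_log_weightedFreq (fun i => (sbar_pos hπ i r).le) (fun i => y i j)
      (hπ_pos j r) (hπ_sum j r)
  have hswap : ∀ θ : ∀ j : Fin J, Fin R → Fin (K j) → ℝ,
      ∑ i, ∑ r, sbar x y β π i r * ∑ j, Real.log (θ j r (y i j)) =
        ∑ r, ∑ j, ∑ i, sbar x y β π i r * Real.log (θ j r (y i j)) := fun θ => by
    simp only [mul_sum]
    rw [sum_comm]
    exact sum_congr rfl fun r _ => sum_comm
  simp only [log_joint hπ, log_joint hπ', mul_add, sum_add_distrib, hswap]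
  exact add_le_add le_rfl (sum_le_sum fun r _ => sum_le_sum fun j _ => hfreq r j)

lemma cycleA_update (β : Fin R → Fin P → ℝ) (r : Fin R) (b : Fin P → ℝ) :
    cycleA x (Function.update β r b) r = cycleA x β r := by
  funext i
  refine congrArg Real.log (sum_congr rfl fun l hl => ?_)
  rw [Function.update_of_ne (ne_of_mem_erase hl)]

lemma log_sum_exp_eq_cycleA_add {r : Fin R} (hr : (univ.erase r).Nonempty)
    (β : Fin R → Fin P → ℝ) (i : Fin n) :
    Real.log (∑ l, Real.exp (∑ p, x i p * β l p)) = cycleA x β r i +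
      Real.log (1 + Real.exp (∑ p, x i p * β r p - cycleA x β r i)) :=
  log_sum_exp_eq_add_log_one_add_exp (fun l => ∑ p, x i p * β l p) hr

lemma log_nu_update_sub {r : Fin R} (hr : (univ.erase r).Nonempty) (β : Fin R → Fin P → ℝ)
    (b : Fin P → ℝ) (i : Fin n) (l : Fin R) :
    Real.log (nu (x i) (Function.update β r b) l) - Real.log (nu (x i) β l) =
      (if l = r then ∑ p, x i p * b p - ∑ p, x i p * β r p else 0) -
      (Real.log (1 + Real.exp (∑ p, x i p * b p - cycleA x β r i)) -
        Real.log (1 + Real.exp (∑ p, x i p * β r p - cycleA x β r i))) := by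
  rw [log_nu, log_nu, log_sum_exp_eq_cycleA_add hr, log_sum_exp_eq_cycleA_add hr,
    cycleA_update, Function.update_self]
  split_ifs with hl
  · subst hl; rw [Function.update_self]; ring
  · rw [Function.update_of_ne hl]; ring

lemma sum_sbar_mul_log_joint_update_sub [NeZero R] {π : ∀ j : Fin J, Fin R → Fin (K j) → ℝ}
    (hπ : ∀ i j r, 0 < π j r (y i j)) {r : Fin R} (hr : (univ.erase r).Nonempty)
    (β : Fin R → Fin P → ℝ) (b : Fin P → ℝ) (i : Fin n) :
    ∑ l, sbar x y β π i l *
        (Real.log (joint x y (Function.update β r b) π i l) - Real.log (joint x y β π i l)) =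
      sbar x y β π i r * (∑ p, x i p * b p - ∑ p, x i p * β r p) -
      (Real.log (1 + Real.exp (∑ p, x i p * b p - cycleA x β r i)) -
        Real.log (1 + Real.exp (∑ p, x i p * β r p - cycleA x β r i))) := by
  simp only [log_joint hπ, add_sub_add_right_eq_sub, log_nu_update_sub hr]
  simp only [mul_sub, sum_sub_distrib, ← sum_mul, sum_sbar hπ, one_mul, mul_ite, mul_zero,
    sum_ite_eq', mem_univ, if_true]

lemma loglik_le_loglik_betaCycle {π : ∀ j : Fin J, Fin R → Fin (K j) → ℝ}
    (hπ : ∀ i j r, 0 < π j r (y i j)) (β : Fin R → Fin P → ℝ) {r : Fin R}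
    (hr : (univ.erase r).Nonempty) (hinv : IsUnit (cycleMat x β r)) :
    loglik x y β π ≤ loglik x y (betaCycle x y π r β) π := by
  have : NeZero R := NeZero.of_pos r.pos
  set ω := cycleOmega x β r
  set η := cycleEta x y π β r
  set b := (cycleMat x β r)⁻¹ *ᵥ (((of x)ᵀ * diagonal ω) *ᵥ η)
  have hnormal : cycleMat x β r *ᵥ b = ((of x)ᵀ * diagonal ω) *ᵥ η := by
    rw [mulVec_mulVec, mul_nonsing_inv _ ((isUnit_iff_isUnit_det _).1 hinv), one_mulVec]
  have hwls := sum_mul_sq_sub_le_of_normal_eq (ω := ω) (of x) (fun i => (pgOmega_pos _).le)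
    hnormal (β r)
  have hη : ∀ i, ω i * η i = sbar x y β π i r - 1 / 2 + ω i * cycleA x β r i := fun i =>
    mul_div_cancel₀ _ (pgOmega_pos _).ne'
  have hupdate : betaCycle x y π r β = Function.update β r b := rfl
  refine loglik_le_of_expected_log_joint_le hπ hπ ?_
  rw [← sub_nonneg, ← sum_sub_distrib, hupdate]
  simp only [← sum_sub_distrib, ← mul_sub]
  simp only [sum_sbar_mul_log_joint_update_sub hπ hr]
  calc 0 ≤ ∑ i, ω i / 2 * (((of x *ᵥ β r) i - η i) ^ 2 - ((of x *ᵥ b) i - η i) ^ 2) := by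
        simp only [mul_sub, sum_sub_distrib, div_mul_eq_mul_div, ← sum_div]
        linarith
    _ ≤ _ := sum_le_sum fun i _ => pgOmega_mul_sq_sub_le (hη i)

lemma betaAfter_succ {π : ∀ j : Fin J, Fin R → Fin (K j) → ℝ} (β : Fin R → Fin P → ℝ) {k : ℕ}
    (hk : k < R) :
    betaAfter x y π β (k + 1) = betaCycle x y π ⟨k, hk⟩ (betaAfter x y π β k) := by
  rw [betaAfter, dif_pos hk]

lemma loglik_le_loglik_betaAfter {π : ∀ j : Fin J, Fin R → Fin (K j) → ℝ}
    (hπ : ∀ i j r, 0 < π j r (y i j)) (β : Fin R → Fin P → ℝ)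
    (hinv : ∀ k (hk : k < R - 1), IsUnit (cycleMat x (betaAfter x y π β k) ⟨k, by omega⟩)) :
    ∀ k ≤ R - 1, loglik x y β π ≤ loglik x y (betaAfter x y π β k) π
  | 0, _ => le_rfl
  | k + 1, hk => by
    have hlast : (univ.erase (⟨k, by omega⟩ : Fin R)).Nonempty :=
      ⟨⟨R - 1, by omega⟩, mem_erase.2 ⟨by simp only [ne_eq, Fin.mk.injEq]; omega, mem_univ _⟩⟩
    rw [betaAfter_succ β (by omega)]
    exact (loglik_le_loglik_betaAfter hπ β hinv k (by omega)).trans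
      (loglik_le_loglik_betaCycle hπ _ hlast (hinv k (by omega)))

end Model

theorem nestedEM_monotone (n P R J : ℕ) (hR : 2 ≤ R)
    (K : Fin J → ℕ)
    (x : Fin n → Fin P → ℝ) (y : ∀ _ : Fin n, ∀ j : Fin J, Fin (K j))
    (β : Fin R → Fin P → ℝ)
    (π : ∀ j : Fin J, Fin R → Fin (K j) → ℝ)
    (hπ_pos : ∀ j r yv, 0 < π j r yv)
    (hπ_sum : ∀ j r, ∑ yv, π j r yv = 1)
    (π' : ∀ j : Fin J, Fin R → Fin (K j) → ℝ)
    (hπ' : ∀ j r yv, π' j r yv =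
      (∑ i, sbar x y β π i r * (if y i j = yv then (1 : ℝ) else 0)) /
        (∑ i, sbar x y β π i r))
    (hinv : ∀ k (hk : k < R - 1),
      IsUnit (cycleMat x (betaAfter x y π' β k) ⟨k, by omega⟩)) :
    loglik x y (betaAfter x y π' β (R - 1)) π' ≥ loglik x y β π := by
  have : NeZero R := ⟨by omega⟩
  obtain rfl : π' = piUpdate x y β π := by
    funext j r yv
    exact hπ' j r yv
  exact (loglik_le_loglik_piUpdate hπ_pos hπ_sum).trans
    (loglik_le_loglik_betaAfter (piUpdate_pos fun i j r => hπ_pos j r _) β hinv _ le_rfl)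

end LCR15
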